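/- arXiv:1810.04930 — 5 statements merged into one kernel-verified Lean document; each statement's English description precedes it below -/
import Mathlib

section
/- Let 0 < λ, λ ≤ c ≤ 2λ, c + λ < 1, c ≥ (1-λ)². Let t > 0 and a, b real with b ≥ a ≥ 1-c-λ. Then (a+ct)/(b+(1-λ)t) ≥ a/(b+ct), i.e. the intervals [a/(b+t), (a+ct)/(b+(1-λ)t)] and [a/(b+ct), (a+ct)/b] overlap (assuming all denominators positive). -/
/-!
After clearing denominators, the difference of the two sides is
`t * (a * (2 * c + l - 1) + c * (b - a) + c ^ 2 * t)`, and `2 * c + l - 1 ≥ 0` because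
`c ≥ (1 - l) ^ 2` and `l < 1 / 2`, so that `2 * (1 - l) ^ 2 + l - 1 = (1 - 2 * l) * (1 - l) ≥ 0`.
-/

lemma one_sub_le_two_mul {l c : ℝ} (hlc : l ≤ c) (hcl : c + l < 1) (hsq : (1 - l) ^ 2 ≤ c) :
    1 - l ≤ 2 * c := by
  have h : 0 ≤ (1 - 2 * l) * (1 - l) := mul_nonneg (by linarith) (by linarith)
  linarith

lemma mul_add_le_add_mul_add {a b c d t : ℝ} (ha : 0 ≤ a) (hab : a ≤ b) (hc : 0 ≤ c)
    (ht : 0 ≤ t) (hd : d ≤ 2 * c) :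
    a * (b + d * t) ≤ (a + c * t) * (b + c * t) := by
  have hdiff : 0 ≤ t * (a * (2 * c - d) + c * (b - a) + c ^ 2 * t) :=
    mul_nonneg ht (add_nonneg (add_nonneg (mul_nonneg ha (sub_nonneg.2 hd))
      (mul_nonneg hc (sub_nonneg.2 hab))) (by positivity))
  linarith

theorem stmt_1_general (l c a b t : ℝ) (h1 : l ≤ c)
    (h3 : c + l < 1) (h4 : c ≥ (1 - l) ^ 2) (ht : 0 < t)
    (hba : b ≥ a) (ha0 : 0 < a) :
    (a + c * t) / (b + (1 - l) * t) ≥ a / (b + c * t) := by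
  have hc : 0 ≤ c := le_trans (sq_nonneg _) h4
  have hb : 0 < b := ha0.trans_le hba
  have hden₁ : 0 < b + (1 - l) * t := by
    have : 0 < 1 - l := by linarith
    positivity
  have hden₂ : 0 < b + c * t := by positivity
  rw [ge_iff_le, div_le_div_iff₀ hden₂ hden₁]
  exact mul_add_le_add_mul_add ha0.le hba hc ht.le (one_sub_le_two_mul h1 h3 h4)

theorem stmt_1 (l c a b t : ℝ) (hl : 0 < l) (h1 : l ≤ c) (h2 : c ≤ 2 * l)
    (h3 : c + l < 1) (h4 : c ≥ (1 - l) ^ 2) (ht : 0 < t)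
    (hba : b ≥ a) (ha : a ≥ 1 - c - l) (ha0 : 0 < a) (hb0 : 0 < b) :
    (a + c * t) / (b + (1 - l) * t) ≥ a / (b + c * t) :=
  stmt_1_general l c a b t h1 h3 h4 ht hba ha0
end

section
/- If (3-√5)/2 ≤ λ ≤ 1/2, then λ/(1-λ) ≥ 1-λ; consequently the intervals λᵏ·[1-λ, 1/(1-λ)] for k ∈ ℤ cover (0,∞). -/
/-!
`(3 - √5) / 2` is the smaller root of `λ² - 3λ + 1`, so for `(3 - √5) / 2 ≤ λ ≤ 1` we get
`(1 - λ)² ≤ λ`, i.e. `λ · (1 / (1 - λ)) ≥ 1 - λ`. This says that the consecutive intervals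
`λ ^ (k + 1) • [1 - λ, 1 / (1 - λ)]` and `λ ^ k • [1 - λ, 1 / (1 - λ)]` overlap, and overlapping
dilates by all integer powers of `λ < 1` cover `(0, ∞)`.
-/

open Set

section Covering

variable {K : Type*} [Field K] [LinearOrder K] [IsStrictOrderedRing K] [Archimedean K]

theorem exists_zpow_succ_lt_le {l x : K} (hl0 : 0 < l) (hl1 : l < 1) (hx : 0 < x) :
    ∃ k : ℤ, l ^ (k + 1) < x ∧ x ≤ l ^ k := by
  obtain ⟨k, hle, hlt⟩ := exists_mem_Ico_zpow (inv_pos.2 hx) ((one_lt_inv₀ hl0).2 hl1)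
  refine ⟨k, ?_, ?_⟩
  · rwa [inv_zpow, inv_lt_inv₀ hx (zpow_pos hl0 _)] at hlt
  · rwa [inv_zpow, inv_le_inv₀ (zpow_pos hl0 _) hx] at hle

theorem Ioi_subset_iUnion_zpow_mul_Icc {l a b : K} (hl0 : 0 < l) (hl1 : l < 1) (hab : a ≤ l * b)
    (hb : 0 < b) :
    Ioi 0 ⊆ ⋃ k : ℤ, (fun y : K => l ^ k * y) '' Icc a b := by
  intro x hx
  obtain ⟨k, hlt, hle⟩ := exists_zpow_succ_lt_le hl0 hl1 (div_pos hx hb)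
  have hlk : 0 < l ^ k := zpow_pos hl0 k
  rw [zpow_add_one₀ hl0.ne', lt_div_iff₀ hb] at hlt
  rw [div_le_iff₀ hb] at hle
  refine mem_iUnion.2 ⟨k, ?_⟩
  rw [image_mul_left_Icc' hlk]
  refine ⟨?_, hle⟩
  calc l ^ k * a ≤ l ^ k * (l * b) := mul_le_mul_of_nonneg_left hab hlk.le
    _ = l ^ k * l * b := by ring
    _ ≤ x := hlt.le

end Covering

theorem one_sub_sq_le_of_three_sub_sqrt_five_div_two_le {l : ℝ} (h1 : (3 - √5) / 2 ≤ l)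
    (h2 : l ≤ 1) : (1 - l) ^ 2 ≤ l := by
  have h5 : √5 ^ 2 = 5 := Real.sq_sqrt (by norm_num)
  have hfactor : (1 - l) ^ 2 - l = (l - (3 - √5) / 2) * (l - (3 + √5) / 2) := by
    ring_nf; rw [h5]; ring
  nlinarith [Real.sqrt_nonneg 5]

theorem stmt_4 (l : ℝ) (h1 : (3 - Real.sqrt 5) / 2 ≤ l) (h2 : l ≤ 1 / 2) :
    l / (1 - l) ≥ 1 - l ∧
      Set.Ioi (0 : ℝ) ⊆ ⋃ k : ℤ, (fun y : ℝ => l ^ k * y) '' Set.Icc (1 - l) (1 / (1 - l)) := by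
  have hsqrt5 : √5 < 3 := (Real.sqrt_lt' (by norm_num)).2 (by norm_num)
  have hl0 : 0 < l := by linarith
  have hl1 : 0 < 1 - l := by linarith
  have hsq := one_sub_sq_le_of_three_sub_sqrt_five_div_two_le h1 (by linarith)
  have hgap : 1 - l ≤ l / (1 - l) := by rw [le_div_iff₀ hl1]; nlinarith
  refine ⟨hgap, Ioi_subset_iUnion_zpow_mul_Icc hl0 (by linarith) ?_ (by positivity)⟩
  rwa [mul_one_div]
end

section
/- Suppose 0 < λ < 1, λ ≤ c ≤ 2λ, c + λ < 1, and c ≥ (1-λ)². Then the union ∪_{k≥0} λᵏ·[2(c-λ), 2] together with {0} equals [0,2]. In particular [2(c-λ), 2c] ∪ [c+1-2λ, 1+c] ∪ [2(1-λ), 2] = [2(c-λ), 2]. -/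
/-!
Every `x ∈ (0, b]` lies in `(l ^ (k+1) b, l ^ k b]` for some `k`, and `l ^ k • [a, b]` covers that
window as soon as `a ≤ l b`; here `a = 2(c - l) ≤ 2l` because `c ≤ 2l`. The three intervals of the
second claim overlap consecutively because `c + 2l ≥ 1`, which follows from `c ≥ (1 - l)²`.
-/

open Set

theorem Set.Icc_union_Icc_of_le_of_le {α : Type*} [LinearOrder α] {a b c d : α} (hac : a ≤ c) (hcb : c ≤ b) (hbd : b ≤ d) :
    Icc a b ∪ Icc c d = Icc a d := by
  rw [Icc_union_Icc' hcb (hac.trans (hcb.trans hbd)), min_eq_left hac, max_eq_right hbd]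

section PowerScaling

variable {K : Type*} [Field K] [LinearOrder K] [IsStrictOrderedRing K] [Archimedean K]

theorem exists_pow_mul_eq_of_mem_Ioc {l a b x : K} (hl0 : 0 < l) (hl1 : l < 1) (ha : a ≤ l * b)
    (hx : x ∈ Ioc 0 b) : ∃ k : ℕ, ∃ y ∈ Icc a b, l ^ k * y = x := by
  obtain ⟨hx0, hxb⟩ := hx
  have hb : 0 < b := hx0.trans_le hxb
  obtain ⟨k, hlow, hup⟩ := exists_nat_pow_near_of_lt_one (div_pos hx0 hb)
    ((div_le_one hb).2 hxb) hl0 hl1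
  have hlk : 0 < l ^ k := pow_pos hl0 k
  refine ⟨k, x / l ^ k, ⟨?_, ?_⟩, mul_div_cancel₀ x hlk.ne'⟩
  · rw [le_div_iff₀ hlk]
    rw [lt_div_iff₀ hb, pow_succ] at hlow
    nlinarith
  · rw [div_le_iff₀ hlk]
    rw [div_le_iff₀ hb] at hup
    linarith

theorem insert_zero_iUnion_pow_mul_image_Icc {l a b : K} (hl0 : 0 < l) (hl1 : l < 1)
    (ha0 : 0 ≤ a) (ha : a ≤ l * b) :
    ({0} ∪ ⋃ k : ℕ, (fun y : K => l ^ k * y) '' Icc a b) = Icc 0 b := by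
  have hb : 0 ≤ b := nonneg_of_mul_nonneg_right (ha0.trans ha) hl0
  ext x
  simp only [mem_union, mem_singleton_iff, mem_iUnion, mem_image]
  constructor
  · rintro (rfl | ⟨k, y, ⟨hay, hyb⟩, rfl⟩)
    · exact ⟨le_rfl, hb⟩
    · have hy : 0 ≤ y := ha0.trans hay
      exact ⟨mul_nonneg (pow_nonneg hl0.le k) hy,
        (mul_le_of_le_one_left hy (pow_le_one₀ hl0.le hl1.le)).trans hyb⟩
  · rintro ⟨hx0, hxb⟩
    rcases hx0.eq_or_lt with rfl | hx0
    · exact Or.inl rfl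
    · exact Or.inr (exists_pow_mul_eq_of_mem_Ioc hl0 hl1 ha ⟨hx0, hxb⟩)

end PowerScaling

theorem stmt_9 (l c : ℝ) (hl : 0 < l) (hl1 : l < 1) (h1 : l ≤ c) (h2 : c ≤ 2 * l)
    (h3 : c + l < 1) (h4 : c ≥ (1 - l) ^ 2) :
    ({0} ∪ ⋃ k : ℕ, (fun y : ℝ => l ^ k * y) '' Set.Icc (2 * (c - l)) 2) =
        Set.Icc (0 : ℝ) 2 ∧
      Set.Icc (2 * (c - l)) (2 * c) ∪ Set.Icc (c + 1 - 2 * l) (1 + c) ∪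
          Set.Icc (2 * (1 - l)) 2 =
        Set.Icc (2 * (c - l)) 2 := by
  have hc2l : 1 ≤ c + 2 * l := by nlinarith
  refine ⟨insert_zero_iUnion_pow_mul_image_Icc hl hl1 (by linarith) (by linarith), ?_⟩
  rw [Icc_union_Icc_of_le_of_le (by linarith) (by linarith) (by linarith),
    Icc_union_Icc_of_le_of_le (by linarith) (by linarith) (by linarith)]
end

section
/- Let 0 < λ < 1, c > 0 with 2c + λ - 1 ≥ 0, and let t > 0, b ≥ a ≥ 0. Then √(a+ct) + √(b+ct) ≥ √a + √(b+(1-λ)t). -/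
/-!
Write `u = c t` and `s = (1 - λ) t`, so that `s ≤ 2u`. If `s ≤ u` the inequality is termwise.
Otherwise put `d = s - u ∈ [0, u]`: since the increments of `√` decrease, moving the increment `d`
from `b + u` down to `a` does not decrease `√a + √(b + u + d)`, and `√(a + d) ≤ √(a + u)`.
-/

open Real

lemma sqrt_add_sqrt_add_le_sqrt_add_add_sqrt {x y d : ℝ} (hx : 0 ≤ x) (hxy : x ≤ y) (hd : 0 ≤ d) :
    √x + √(y + d) ≤ √(x + d) + √y := by
  have hy : 0 ≤ y := hx.trans hxy
  have hprod : √x * √(y + d) ≤ √(x + d) * √y := by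
    rw [← sqrt_mul hx, ← sqrt_mul (by linarith)]
    exact sqrt_le_sqrt (by nlinarith)
  refine (pow_le_pow_iff_left₀ (by positivity) (by positivity) two_ne_zero).mp ?_
  rw [add_sq, add_sq, sq_sqrt hx, sq_sqrt (by linarith), sq_sqrt (by linarith), sq_sqrt hy]
  linarith

lemma sqrt_add_sqrt_add_le_of_le_two_mul {a b u s : ℝ} (ha : 0 ≤ a) (hab : a ≤ b + u)
    (hu : 0 ≤ u) (hs : s ≤ 2 * u) :
    √a + √(b + s) ≤ √(a + u) + √(b + u) := by
  rcases le_or_gt s u with hsu | hus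
  · gcongr; linarith
  · calc √a + √(b + s) = √a + √((b + u) + (s - u)) := by ring_nf
      _ ≤ √(a + (s - u)) + √(b + u) :=
        sqrt_add_sqrt_add_le_sqrt_add_add_sqrt ha hab (by linarith)
      _ ≤ √(a + u) + √(b + u) := by gcongr; linarith

theorem stmt_11_general (l c a b t : ℝ) (hc : 0 < c)
    (h1 : 2 * c + l - 1 ≥ 0) (ht : 0 < t) (ha : 0 ≤ a) (hba : b ≥ a) :
    Real.sqrt (a + c * t) + Real.sqrt (b + c * t) ≥
      Real.sqrt a + Real.sqrt (b + (1 - l) * t) :=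
  sqrt_add_sqrt_add_le_of_le_two_mul ha (by nlinarith) (by positivity)
    (by nlinarith [mul_nonneg h1 ht.le])

theorem stmt_11 (l c a b t : ℝ) (hl : 0 < l) (hl1 : l < 1) (hc : 0 < c)
    (h1 : 2 * c + l - 1 ≥ 0) (ht : 0 < t) (ha : 0 ≤ a) (hba : b ≥ a) :
    Real.sqrt (a + c * t) + Real.sqrt (b + c * t) ≥
      Real.sqrt a + Real.sqrt (b + (1 - l) * t) :=
  stmt_11_general l c a b t hc h1 ht ha hba
end

section
/- Let 0 < λ < 1, c > 0, t > 0, a, b ≥ 0 with b ≥ a, c + 2λ - 1 ≥ 0, and 8a(2λ+c-1) ≥ t(3 - 4λ - 4λc - c² - 2c). Then √(a+t) + √(b+ct) ≥ √(a+(1-λ)t) + √(b+(1-λ)t). -/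
/-!
If `c ≥ 1 - l` both square roots on the left dominate those on the right termwise. Otherwise
concavity of the square root gives `√(a + c t) + √(b + (1 - l) t) ≤ √(b + c t) + √(a + (1 - l) t)`
(since `a ≤ b` and `c t ≤ (1 - l) t`), so it suffices to show
`2 √(a + (1 - l) t) ≤ √(a + t) + √(a + c t)`. After squaring this is a polynomial inequality,
which the hypothesis `8 a (2 l + c - 1) ≥ t (3 - 4 l - 4 l c - c² - 2 c)` is tailored to give.
-/

namespace Real

lemma sqrt_add_sqrt_sq {p q : ℝ} (hp : 0 ≤ p) (hq : 0 ≤ q) :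
    (√p + √q) ^ 2 = p + q + 2 * √(p * q) := by
  rw [sqrt_mul hp, add_sq, sq_sqrt hp, sq_sqrt hq]
  ring

lemma sqrt_add_sqrt_le_sqrt_add_sqrt {p q r s : ℝ} (hp : 0 ≤ p) (hq : 0 ≤ q) (hr : 0 ≤ r)
    (hs : 0 ≤ s) (h : p + q + 2 * √(p * q) ≤ r + s + 2 * √(r * s)) :
    √p + √q ≤ √r + √s := by
  rw [← pow_le_pow_iff_left₀ (by positivity) (by positivity) two_ne_zero,
    sqrt_add_sqrt_sq hp hq, sqrt_add_sqrt_sq hr hs]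
  exact h

lemma sqrt_add_add_sqrt_add_le {x y u v : ℝ} (hxy : x ≤ y) (huv : u ≤ v) (hxu : 0 ≤ x + u) :
    √(x + u) + √(y + v) ≤ √(y + u) + √(x + v) := by
  apply sqrt_add_sqrt_le_sqrt_add_sqrt hxu (by linarith) (by linarith) (by linarith)
  have : (x + u) * (y + v) ≤ (y + u) * (x + v) := by
    nlinarith [mul_nonneg (sub_nonneg.2 hxy) (sub_nonneg.2 huv)]
  linarith [sqrt_le_sqrt this]

end Real

open Real

section

variable {l c a t : ℝ}

lemma linear_le_two_mul_sqrt_mul (ha : 0 ≤ a) (ht : 0 ≤ t) (hc : 0 ≤ c)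
    (h1 : c + 2 * l - 1 ≥ 0)
    (h2 : 8 * a * (2 * l + c - 1) ≥ t * (3 - 4 * l - 4 * l * c - c ^ 2 - 2 * c)) :
    2 * a + (3 - 4 * l - c) * t ≤ 2 * √((a + t) * (a + c * t)) := by
  rcases le_or_gt 0 (3 - 4 * l - c) with hm | hm
  · -- `4 (a + t) (a + c t) - (2 a + (3 - 4 l - c) t)²` is
    -- `t (8 a (2 l + c - 1) - t (3 - 4 l - 4 l c - c² - 2 c)) + 2 t² (c + 2 l - 1) (3 - 4 l - c)`.
    have hsq : (2 * a + (3 - 4 * l - c) * t) ^ 2 ≤ 2 ^ 2 * ((a + t) * (a + c * t)) := by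
      nlinarith [mul_nonneg ht (sub_nonneg.2 h2), mul_nonneg (mul_nonneg h1 hm) (sq_nonneg t)]
    calc 2 * a + (3 - 4 * l - c) * t ≤ |2 * a + (3 - 4 * l - c) * t| := le_abs_self _
      _ ≤ √(2 ^ 2 * ((a + t) * (a + c * t))) := abs_le_sqrt hsq
      _ = 2 * √((a + t) * (a + c * t)) := by
        rw [sqrt_mul (by norm_num), sqrt_sq (by norm_num)]
  · have ha_le : a ≤ √((a + t) * (a + c * t)) := by
      calc a = |a| := (abs_of_nonneg ha).symm
        _ ≤ √((a + t) * (a + c * t)) := abs_le_sqrt (by nlinarith [mul_nonneg hc ht])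
    nlinarith

lemma two_mul_sqrt_le_sqrt_add_sqrt (ha : 0 ≤ a) (ht : 0 ≤ t) (hc : 0 ≤ c) (hl1 : l ≤ 1)
    (h1 : c + 2 * l - 1 ≥ 0)
    (h2 : 8 * a * (2 * l + c - 1) ≥ t * (3 - 4 * l - 4 * l * c - c ^ 2 - 2 * c)) :
    2 * √(a + (1 - l) * t) ≤ √(a + t) + √(a + c * t) := by
  have hz : 0 ≤ a + (1 - l) * t := by nlinarith
  rw [two_mul]
  apply sqrt_add_sqrt_le_sqrt_add_sqrt hz hz (by linarith) (by positivity)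
  rw [sqrt_mul_self hz]
  linarith [linear_le_two_mul_sqrt_mul ha ht hc h1 h2]

end

theorem stmt_13_general (l c a b t : ℝ) (hl : 0 < l) (hl1 : l < 1) (hc : 0 < c)
    (ht : 0 < t) (ha : 0 ≤ a) (hba : b ≥ a)
    (h1 : c + 2 * l - 1 ≥ 0)
    (h2 : 8 * a * (2 * l + c - 1) ≥ t * (3 - 4 * l - 4 * l * c - c ^ 2 - 2 * c)) :
    Real.sqrt (a + t) + Real.sqrt (b + c * t) ≥
      Real.sqrt (a + (1 - l) * t) + Real.sqrt (b + (1 - l) * t) := by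
  rcases le_or_gt (1 - l) c with hcl | hcl
  · exact add_le_add (sqrt_le_sqrt (by nlinarith)) (sqrt_le_sqrt (by nlinarith))
  · have hmid := two_mul_sqrt_le_sqrt_add_sqrt ha ht.le hc.le hl1.le h1 h2
    have hswap : √(a + c * t) + √(b + (1 - l) * t) ≤ √(b + c * t) + √(a + (1 - l) * t) :=
      sqrt_add_add_sqrt_add_le hba (by nlinarith) (by positivity)
    linarith

theorem stmt_13 (l c a b t : ℝ) (hl : 0 < l) (hl1 : l < 1) (hc : 0 < c)
    (ht : 0 < t) (ha : 0 ≤ a) (hb : 0 ≤ b) (hba : b ≥ a)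
    (h1 : c + 2 * l - 1 ≥ 0)
    (h2 : 8 * a * (2 * l + c - 1) ≥ t * (3 - 4 * l - 4 * l * c - c ^ 2 - 2 * c)) :
    Real.sqrt (a + t) + Real.sqrt (b + c * t) ≥
      Real.sqrt (a + (1 - l) * t) + Real.sqrt (b + (1 - l) * t) :=
  stmt_13_general l c a b t hl hl1 hc ht ha hba h1 h2
end
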